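/- arXiv:1601.00023 — 4 statements merged into one kernel-verified Lean document; each statement's English description precedes it below -/
import Mathlib

section
/- Let H be a finitely generated infinite group with finite symmetric generating set S. Suppose there exist a constant C > 0 and finite subsets F_n of H such that the edge boundary of each F_n in the Cayley graph Cay(H,S) has at most C edges, while |F_n| tends to infinity. Then H has at least 2 ends (i.e., there is a finite set K of vertices such that the complement of K in the Cayley graph has at least two infinite connected components). -/
open MeasureTheory ENNReal Filter

/-- The Cayley graph of a group with respect to a (symmetric) generating set `S`. -/
def cayley {H : Type*} [Group H] (S : Set H) : SimpleGraph H :=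
  SimpleGraph.fromRel (fun g h => g⁻¹ * h ∈ S)

/-- The edge boundary of a vertex set `F`: edges of the Cayley graph with exactly one
endpoint in `F`. -/
def edgeBoundary {H : Type*} [Group H] (S : Set H) (F : Set H) : Set (Sym2 H) :=
  {e | ∃ a b : H, e = s(a, b) ∧ (cayley S).Adj a b ∧ a ∈ F ∧ b ∉ F}

/-- Reachability within a vertex subset `A` of the Cayley graph: there is a walk all of
whose vertices lie in `A`. -/
def reachIn {H : Type*} [Group H] (S : Set H) (A : Set H) (g h : H) : Prop :=
  ∃ w : (cayley S).Walk g h, ∀ v ∈ w.support, v ∈ A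

/-- The connected component of `g` in the induced subgraph on `A`. -/
def compIn {H : Type*} [Group H] (S : Set H) (A : Set H) (g : H) : Set H :=
  {h | reachIn S A g h}

/-!
Suppose no finite set separates two infinite components. Fill in the finite complementary
components of a large `F n` to get a finite `E` whose complement is connected, with boundary no
larger than that of `F n`. Since `E` has at most `C` inner boundary vertices and is large, one of
its components reaches far from its boundary vertex `c`, and so does the infinite complement from
a neighbour of `c`; translating `c` to `1`, both `E` and `Eᶜ` meet every sphere of radius up to
`m` around `1`. An ultrafilter limit `A` of these sets still has at most `C` boundary edges and
meets every sphere from both sides, so `A` and `Aᶜ` are infinite. The inner boundary of `A` is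
then a finite set separating an infinite component inside `A` from one inside `Aᶜ`.
-/

open Pointwise

namespace SimpleGraph

variable {V W : Type*} {G : SimpleGraph V} {G' : SimpleGraph W}

theorem Iso.dist_eq (φ : G ≃g G') (u v : V) : G'.dist (φ u) (φ v) = G.dist u v := by
  by_cases h : G.Reachable u v
  · obtain ⟨w, hw⟩ := h.exists_walk_length_eq_dist
    have h' : G'.Reachable (φ u) (φ v) := Iso.reachable_iff.mpr h
    obtain ⟨w', hw'⟩ := h'.exists_walk_length_eq_dist
    refine le_antisymm ((dist_le (w.map φ.toHom)).trans (by simp [hw])) ?_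
    simpa [hw'] using dist_le (w'.map φ.symm.toHom)
  · rw [dist_eq_zero_of_not_reachable h, dist_eq_zero_of_not_reachable (mt Iso.reachable_iff.mp h)]

theorem dist_le_dist_add_one_of_adj {c v w : V} (h : G.Adj v w) :
    G.dist c w ≤ G.dist c v + 1 := by
  rcases h.diff_dist_adj (u := c) with h | h | h <;> omega

theorem Connected.finite_setOf_dist_le (hG : G.Connected) (hfin : ∀ v, (G.neighborSet v).Finite)
    (c : V) (r : ℕ) : {v | G.dist c v ≤ r}.Finite := by
  induction r generalizing c with
  | zero => simp [hG.dist_eq_zero_iff]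
  | succ r ih =>
    refine ((hfin c).biUnion fun u _ => ih u).insert c |>.subset fun v hv => ?_
    obtain ⟨w, hw⟩ := hG.exists_walk_length_eq_dist c v
    cases w with
    | nil => exact Set.mem_insert _ _
    | cons h w =>
      refine Set.mem_insert_of_mem _ (Set.mem_biUnion h ?_)
      have := dist_le w
      simp only [Walk.length_cons, Set.mem_ofPred_eq] at hw hv ⊢
      omega

theorem infinite_of_forall_exists_dist_eq {A : Set V} (c : V)
    (h : ∀ r, 0 < r → ∃ v ∈ A, G.dist c v = r) : A.Infinite := by
  refine Set.Infinite.of_image (G.dist c) ((Set.Ioi_infinite 0).mono fun r hr => ?_)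
  obtain ⟨v, hv, rfl⟩ := h r hr
  exact ⟨v, hv, rfl⟩

end SimpleGraph

theorem Ultrafilter.liminf_inter_nonempty {ι α : Type*} (U : Ultrafilter ι) {E : ι → Set α}
    {B : Set α} (hB : B.Finite) (h : ∀ᶠ i in U, (E i ∩ B).Nonempty) :
    (liminf E (U : Filter ι) ∩ B).Nonempty := by
  by_contra hne
  have hout : ∀ᶠ i in U, ∀ x ∈ B, x ∉ E i := by
    refine (eventually_all_finite hB).mpr fun x hx => Ultrafilter.eventually_not.mpr fun hx' => ?_
    exact hne ⟨x, mem_liminf_iff_eventually_mem.mpr hx', hx⟩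
  obtain ⟨i, ⟨x, hxE, hxB⟩, hi⟩ := (h.and hout).exists
  exact hi x hxB hxE

theorem Set.Finite.ncard_biUnion_le_mul {ι α : Type*} {t : Set ι} (ht : t.Finite)
    {s : ι → Set α} {N : ℕ} (hs : ∀ i ∈ t, (s i).ncard ≤ N) :
    (⋃ i ∈ t, s i).ncard ≤ t.ncard * N := by
  lift t to Finset ι using ht
  simpa using (t.set_ncard_biUnion_le s).trans (Finset.sum_le_card_nsmul _ _ _ hs)

section Cayley

variable {H : Type*} [Group H] {S : Set H}

theorem cayley_adj_iff {a b : H} :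
    (cayley S).Adj a b ↔ a ≠ b ∧ (a⁻¹ * b ∈ S ∨ b⁻¹ * a ∈ S) := by
  simp [cayley, SimpleGraph.fromRel_adj]

def cayleyMulLeft (S : Set H) (g : H) : cayley S ≃g cayley S where
  toEquiv := Equiv.mulLeft g
  map_rel_iff' := by simp [cayley_adj_iff, mul_assoc]

@[simp]
theorem cayleyMulLeft_apply (g x : H) : cayleyMulLeft S g x = g * x := rfl

theorem cayley_dist_mul_left (g x y : H) :
    (cayley S).dist (g * x) (g * y) = (cayley S).dist x y :=
  (cayleyMulLeft S g).dist_eq x y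

theorem cayley_connected (hgen : Subgroup.closure S = ⊤) : (cayley S).Connected := by
  have hreach (x : H) : (cayley S).Reachable 1 x := by
    have hx : x ∈ Subgroup.closure S := hgen ▸ Subgroup.mem_top x
    induction hx using Subgroup.closure_induction with
    | mem s hs =>
      by_cases h1 : s = 1
      · exact h1 ▸ .rfl
      · exact (cayley_adj_iff.mpr ⟨Ne.symm h1, .inl (by simpa using hs)⟩).reachable
    | one => exact .rfl
    | mul a b _ _ ha hb => exact ha.trans (by simpa using hb.map (cayleyMulLeft S a).toHom)
    | inv a _ ha => simpa using (ha.map (cayleyMulLeft S a⁻¹).toHom).symm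
  exact .mk fun x y => (hreach x).symm.trans (hreach y)

theorem cayley_neighborSet_finite (hS : S.Finite) (a : H) :
    ((cayley S).neighborSet a).Finite := by
  refine ((hS.image (a * ·)).union (hS.image fun s => a * s⁻¹)).subset fun b hb => ?_
  rcases (cayley_adj_iff.mp hb).2 with h | h
  · exact .inl ⟨a⁻¹ * b, h, by group⟩
  · exact .inr ⟨b⁻¹ * a, h, by group⟩

theorem ncard_setOf_cayley_dist_le (a : H) (m : ℕ) :
    {y | (cayley S).dist a y ≤ m}.ncard = {y | (cayley S).dist 1 y ≤ m}.ncard := by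
  have : {y | (cayley S).dist a y ≤ m} = a • {y | (cayley S).dist 1 y ≤ m} := by
    ext y
    rw [Set.mem_smul_set_iff_inv_smul_mem, Set.mem_ofPred_eq, Set.mem_ofPred_eq,
      ← cayley_dist_mul_left a⁻¹, inv_mul_cancel, smul_eq_mul]
  rw [this, Set.ncard_smul_set]

end Cayley

section Components

variable {H : Type*} [Group H] {S : Set H} {A B : Set H} {x y z : H}

theorem reachIn_refl (hx : x ∈ A) : reachIn S A x x :=
  ⟨.nil, by simpa using hx⟩

theorem reachIn_of_adj (h : (cayley S).Adj x y) (hx : x ∈ A) (hy : y ∈ A) : reachIn S A x y :=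
  ⟨.cons h .nil, by simp [hx, hy]⟩

theorem reachIn_symm (h : reachIn S A x y) : reachIn S A y x := by
  obtain ⟨w, hw⟩ := h
  exact ⟨w.reverse, by simpa using hw⟩

theorem reachIn_trans (hxy : reachIn S A x y) (hyz : reachIn S A y z) : reachIn S A x z := by
  obtain ⟨w₁, hw₁⟩ := hxy
  obtain ⟨w₂, hw₂⟩ := hyz
  refine ⟨w₁.append w₂, fun v hv => ?_⟩
  rcases List.mem_append.mp (w₁.support_append w₂ ▸ hv) with hv | hv
  · exact hw₁ v hv
  · exact hw₂ v (List.mem_of_mem_tail hv)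

theorem reachIn_mem_left (h : reachIn S A x y) : x ∈ A :=
  h.elim fun w hw => hw x w.start_mem_support

theorem reachIn_mem_right (h : reachIn S A x y) : y ∈ A :=
  h.elim fun w hw => hw y w.end_mem_support

theorem reachIn_of_mem_support {w : (cayley S).Walk x y} (hw : ∀ v ∈ w.support, v ∈ A)
    {v : H} (hv : v ∈ w.support) : reachIn S A x v := by
  classical
  exact ⟨w.takeUntil v hv, fun u hu => hw u (w.support_takeUntil_subset_support hv hu)⟩

theorem compIn_subset (x : H) : compIn S A x ⊆ A :=
  fun _ => reachIn_mem_right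

theorem compIn_mono (hAB : A ⊆ B) (x : H) : compIn S A x ⊆ compIn S B x :=
  fun _ ⟨w, hw⟩ => ⟨w, fun v hv => hAB (hw v hv)⟩

theorem mem_compIn_of_adj (hy : y ∈ compIn S A x) (h : (cayley S).Adj y z) (hz : z ∈ A) :
    z ∈ compIn S A x :=
  reachIn_trans hy (reachIn_of_adj h (reachIn_mem_right hy) hz)

theorem reachIn_compIn (hx : x ∈ compIn S A z) (hy : y ∈ compIn S A z) :
    reachIn S (compIn S A z) x y := by
  obtain ⟨w, hw⟩ := reachIn_trans (reachIn_symm hx) hy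
  exact ⟨w, fun v hv => reachIn_trans hx (reachIn_of_mem_support hw hv)⟩

/-- A discrete intermediate value theorem: distances change by at most one along an edge. -/
theorem exists_reachIn_dist_eq (c : H) {r : ℕ} (hxy : reachIn S A x y)
    (hx : (cayley S).dist c x ≤ r) (hy : r ≤ (cayley S).dist c y) :
    ∃ v, reachIn S A x v ∧ (cayley S).dist c v = r := by
  obtain ⟨w, hw⟩ := hxy
  induction w with
  | nil => exact ⟨_, reachIn_refl (hw _ (by simp)), le_antisymm hx hy⟩
  | @cons a b _ h w ih =>
    have ha : a ∈ A := hw a (by simp)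
    rcases hx.eq_or_lt with hx | hx
    · exact ⟨a, reachIn_refl ha, hx⟩
    have hb : (cayley S).dist c b ≤ r := (SimpleGraph.dist_le_dist_add_one_of_adj h).trans hx
    obtain ⟨v, hbv, hv⟩ := ih hb hy (fun u hu => hw u (by simp [hu]))
    exact ⟨v, reachIn_trans (reachIn_of_adj h ha (reachIn_mem_left hbv)) hbv, hv⟩

end Components

section Boundary

variable {H : Type*} [Group H] {S : Set H} {A X : Set H}

theorem edgeBoundary_compl (X : Set H) : edgeBoundary S Xᶜ = edgeBoundary S X := by
  have key (Y : Set H) : edgeBoundary S Yᶜ ⊆ edgeBoundary S Y := by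
    rintro _ ⟨a, b, rfl, hadj, ha, hb⟩
    exact ⟨b, a, Sym2.eq_swap, hadj.symm, not_not.mp hb, ha⟩
  exact (key X).antisymm (by simpa using key Xᶜ)

theorem image_edgeBoundary_subset_edgeBoundary_smul (g : H) (X : Set H) :
    Sym2.map (g * ·) '' edgeBoundary S X ⊆ edgeBoundary S (g • X) := by
  rintro _ ⟨_, ⟨a, b, rfl, hadj, ha, hb⟩, rfl⟩
  exact ⟨g * a, g * b, rfl, (cayleyMulLeft S g).map_adj_iff.mpr hadj,
    Set.smul_mem_smul_set ha, by rwa [← smul_eq_mul, Set.smul_mem_smul_set_iff]⟩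

theorem encard_edgeBoundary_smul_le (g : H) (X : Set H) :
    (edgeBoundary S (g • X)).encard ≤ (edgeBoundary S X).encard := by
  calc (edgeBoundary S (g • X)).encard
      = (Sym2.map (g⁻¹ * ·) '' edgeBoundary S (g • X)).encard :=
        ((Sym2.map.injective (mul_right_injective g⁻¹)).encard_image _).symm
    _ ≤ (edgeBoundary S (g⁻¹ • g • X)).encard :=
        Set.encard_mono (image_edgeBoundary_subset_edgeBoundary_smul _ _)
    _ = (edgeBoundary S X).encard := by rw [inv_smul_smul]

theorem edgeBoundary_compIn_subset (x : H) :
    edgeBoundary S (compIn S A x) ⊆ edgeBoundary S A := by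
  rintro _ ⟨a, b, rfl, hadj, ha, hb⟩
  exact ⟨a, b, rfl, hadj, compIn_subset x ha, fun hbA => hb (mem_compIn_of_adj ha hadj hbA)⟩

def innerBoundary (S : Set H) (X : Set H) : Set H :=
  {a | a ∈ X ∧ ∃ b, (cayley S).Adj a b ∧ b ∉ X}

theorem innerBoundary_subset (X : Set H) : innerBoundary S X ⊆ X := fun _ h => h.1

theorem encard_innerBoundary_le (X : Set H) :
    (innerBoundary S X).encard ≤ (edgeBoundary S X).encard := by
  have hout : ∀ a ∈ innerBoundary S X, ∃ b, (cayley S).Adj a b ∧ b ∉ X := fun a ha => ha.2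
  choose! p hp using hout
  refine Set.encard_le_encard_of_injOn (f := fun a => s(a, p a))
    (fun a ha => ⟨a, p a, rfl, (hp a ha).1, ha.1, (hp a ha).2⟩) fun a ha a' ha' he => ?_
  rcases Sym2.eq_iff.mp he with ⟨h, -⟩ | ⟨h, -⟩
  · exact h
  · exact absurd (h ▸ ha.1) (hp a' ha').2

theorem innerBoundary_finite (h : (edgeBoundary S X).Finite) : (innerBoundary S X).Finite :=
  Set.encard_lt_top_iff.mp ((encard_innerBoundary_le X).trans_lt h.encard_lt_top)

theorem exists_mem_support_innerBoundary {x z : H} (w : (cayley S).Walk x z) (hx : x ∈ X)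
    (hz : z ∉ X) : ∃ a ∈ w.support, a ∈ innerBoundary S X ∧ reachIn S X x a := by
  induction w with
  | nil => exact absurd hx hz
  | @cons x y _ h w ih =>
    by_cases hy : y ∈ X
    · obtain ⟨a, haw, ha, hya⟩ := ih hy hz
      exact ⟨a, by simp [haw], ha, reachIn_trans (reachIn_of_adj h hx hy) hya⟩
    · exact ⟨x, by simp, ⟨hx, y, h, hy⟩, reachIn_refl hx⟩

theorem subset_biUnion_compIn_innerBoundary (hconn : (cayley S).Connected) (hX : Xᶜ.Nonempty) :
    X ⊆ ⋃ a ∈ innerBoundary S X, compIn S X a := by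
  intro x hx
  obtain ⟨z, hz⟩ := hX
  obtain ⟨a, -, ha, hxa⟩ := exists_mem_support_innerBoundary (hconn.preconnected x z).some hx hz
  exact Set.mem_biUnion ha (reachIn_symm hxa)

theorem exists_infinite_compIn (hconn : (cayley S).Connected) (hX : X.Infinite)
    (hXc : Xᶜ.Nonempty) (hB : (innerBoundary S X).Finite) :
    ∃ a ∈ X, (compIn S X a).Infinite := by
  by_contra! h
  exact hX ((hB.biUnion fun a ha => h a (innerBoundary_subset X ha)).subset
    (subset_biUnion_compIn_innerBoundary hconn hXc))

theorem exists_lt_ncard_compIn (hconn : (cayley S).Connected) (hXf : X.Finite)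
    (hXc : Xᶜ.Nonempty) {N : ℕ} (h : (innerBoundary S X).ncard * N < X.ncard) :
    ∃ a ∈ innerBoundary S X, N < (compIn S X a).ncard := by
  by_contra! hle
  have hB : (innerBoundary S X).Finite := hXf.subset (innerBoundary_subset X)
  have := (Set.ncard_le_ncard (subset_biUnion_compIn_innerBoundary hconn hXc)
    (hB.biUnion fun a _ => hXf.subset (compIn_subset a))).trans (hB.ncard_biUnion_le_mul hle)
  omega

end Boundary

section Ends

variable {H : Type*} [Group H] {S : Set H}

def SeparatesInfiniteComponents (S : Set H) (K : Set H) : Prop :=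
  ∃ g h : H, g ∉ K ∧ h ∉ K ∧ (compIn S Kᶜ g).Infinite ∧ (compIn S Kᶜ h).Infinite ∧
    ¬ reachIn S Kᶜ g h

def MeetsSpheres (S : Set H) (c : H) (E : Set H) (m : ℕ) : Prop :=
  ∀ r, 0 < r → r ≤ m → ∃ y ∈ E, (cayley S).dist c y = r

theorem MeetsSpheres.smul {c : H} {E : Set H} {m : ℕ} (h : MeetsSpheres S c E m) (g : H) :
    MeetsSpheres S (g * c) (g • E) m := fun r hr hrm => by
  obtain ⟨y, hy, hyr⟩ := h r hr hrm
  exact ⟨g * y, Set.smul_mem_smul_set hy, by rw [cayley_dist_mul_left, hyr]⟩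

theorem finite_compl_compIn (hconn : (cayley S).Connected) {F : Set H} (hF : F.Finite)
    (hbd : (edgeBoundary S F).Finite) (hsep : ¬ SeparatesInfiniteComponents S F) {z : H}
    (hQ : (compIn S Fᶜ z).Infinite) : (compIn S Fᶜ z)ᶜ.Finite := by
  set Q := compIn S Fᶜ z
  have hzF : z ∈ Fᶜ := reachIn_mem_left hQ.nonempty.some_mem
  have hzQ : z ∈ Q := reachIn_refl hzF
  have hB : innerBoundary S (Fᶜ ∩ Qᶜ) ⊆ innerBoundary S Fᶜ := by
    rintro a ⟨⟨haF, haQ⟩, b, hab, hb⟩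
    refine ⟨haF, b, hab, fun hbF => hb ⟨hbF, fun hbQ => haQ ?_⟩⟩
    exact mem_compIn_of_adj hbQ hab.symm haF
  have hX : (Fᶜ ∩ Qᶜ).Finite := by
    by_contra hX
    obtain ⟨a, ⟨haF, haQ⟩, ha⟩ := exists_infinite_compIn hconn hX ⟨z, fun h => h.2 hzQ⟩
      ((innerBoundary_finite (by rwa [edgeBoundary_compl])).subset hB)
    exact hsep ⟨z, a, hzF, haF, hQ, ha.mono (compIn_mono Set.inter_subset_left a), haQ⟩
  exact (hF.union hX).subset fun x hx => by
    by_cases hxF : x ∈ F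
    · exact .inl hxF
    · exact .inr ⟨hxF, hx⟩

theorem exists_meetsSpheres (hconn : (cayley S).Connected) (hS : S.Finite) {E : Set H}
    (hE : E.Finite) (hEc : Eᶜ.Infinite)
    (hEc_conn : ∀ x ∈ Eᶜ, ∀ y ∈ Eᶜ, reachIn S Eᶜ x y) {m : ℕ}
    (hlarge : (innerBoundary S E).ncard * {y | (cayley S).dist 1 y ≤ m}.ncard < E.ncard) :
    ∃ c, MeetsSpheres S c E m ∧ MeetsSpheres S c Eᶜ m := by
  have hball (c : H) := hconn.finite_setOf_dist_le (cayley_neighborSet_finite hS) c m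
  obtain ⟨c, ⟨hcE, b, hcb, hb⟩, hbig⟩ := exists_lt_ncard_compIn hconn hE hEc.nonempty hlarge
  rw [← ncard_setOf_cayley_dist_le c] at hbig
  obtain ⟨y, hy, hyfar⟩ := Set.exists_mem_notMem_of_ncard_lt_ncard hbig (hball c)
  obtain ⟨y', hy', hy'far⟩ := (hEc.sdiff (hball c)).nonempty
  refine ⟨c, fun r _ hrm => ?_, fun r hr hrm => ?_⟩
  · obtain ⟨v, hcv, hv⟩ :=
      exists_reachIn_dist_eq c hy (by simp) (hrm.trans (not_le.mp hyfar).le)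
    exact ⟨v, reachIn_mem_right hcv, hv⟩
  · obtain ⟨v, hbv, hv⟩ := exists_reachIn_dist_eq c (r := r) (hEc_conn b hb y' hy')
      (by rwa [SimpleGraph.dist_eq_one_iff_adj.mpr hcb]) (hrm.trans (not_le.mp hy'far).le)
    exact ⟨v, reachIn_mem_right hbv, hv⟩

theorem exists_meetsSpheres_one_of_large [Infinite H] (hconn : (cayley S).Connected)
    (hS : S.Finite) {F : Set H} (hF : F.Finite) {C : ℕ} (hbd : (edgeBoundary S F).encard ≤ C)
    (hsep : ¬ SeparatesInfiniteComponents S F) {m : ℕ}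
    (hlarge : C * {y | (cayley S).dist 1 y ≤ m}.ncard < F.ncard) :
    ∃ E, (edgeBoundary S E).encard ≤ C ∧
      MeetsSpheres S 1 E m ∧ MeetsSpheres S 1 Eᶜ m := by
  have hbdf : (edgeBoundary S F).Finite := Set.finite_of_encard_le_coe hbd
  have hFne : F.Nonempty := Set.nonempty_of_ncard_ne_zero (by omega)
  obtain ⟨z, -, hQ⟩ := exists_infinite_compIn hconn hF.infinite_compl (by simpa using hFne)
    (innerBoundary_finite (by rwa [edgeBoundary_compl]))
  set E := (compIn S Fᶜ z)ᶜ
  have hEbd : (edgeBoundary S E).encard ≤ C := by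
    rw [edgeBoundary_compl]
    exact (Set.encard_mono (edgeBoundary_compIn_subset z)).trans (by rwa [edgeBoundary_compl])
  have hE : E.Finite := finite_compl_compIn hconn hF hbdf hsep hQ
  have hFE : F ⊆ E := fun x hx hxQ => compIn_subset z hxQ hx
  have hBC : (innerBoundary S E).ncard ≤ C :=
    ENat.toNat_le_of_le_natCast ((encard_innerBoundary_le E).trans hEbd)
  have hEc : Eᶜ = compIn S Fᶜ z := compl_compl _
  obtain ⟨c, hcE, hcEc⟩ := exists_meetsSpheres hconn hS hE (hEc ▸ hQ)
    (fun x hx y hy => by rw [hEc] at hx hy ⊢; exact reachIn_compIn hx hy)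
    ((Nat.mul_le_mul_right _ hBC).trans_lt (hlarge.trans_le (Set.ncard_le_ncard hFE hE)))
  refine ⟨c⁻¹ • E, (encard_edgeBoundary_smul_le c⁻¹ E).trans hEbd, ?_, ?_⟩
  · simpa using hcE.smul c⁻¹
  · simpa [← Set.smul_set_compl] using hcEc.smul c⁻¹

theorem encard_edgeBoundary_liminf_le {ι : Type*} (U : Ultrafilter ι) {E : ι → Set H} {C : ℕ}
    (hbd : ∀ i, (edgeBoundary S (E i)).encard ≤ C) :
    (edgeBoundary S (liminf E (U : Filter ι))).encard ≤ C := by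
  by_contra! hlt
  obtain ⟨T, hT, hTcard⟩ := Set.exists_subset_encard_eq (Order.add_one_le_of_lt hlt)
  have hTf : T.Finite := Set.finite_of_encard_eq_coe (by rw [hTcard]; rfl)
  have hev : ∀ᶠ i in U, T ⊆ edgeBoundary S (E i) := by
    refine (eventually_all_finite hTf).mpr fun e he => ?_
    obtain ⟨a, b, rfl, hadj, ha, hb⟩ := hT he
    filter_upwards [mem_liminf_iff_eventually_mem.mp ha,
      Ultrafilter.eventually_not.mpr (mt mem_liminf_iff_eventually_mem.mpr hb)] with i hai hbi
    exact ⟨a, b, rfl, hadj, hai, hbi⟩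
  obtain ⟨i, hi⟩ := hev.exists
  have := (Set.encard_mono hi).trans (hbd i)
  rw [hTcard] at this
  exact absurd this (by norm_cast; omega)

/-- Compactness: take an ultrafilter limit of the sets `E m`. -/
theorem exists_infinite_coinfinite_of_meetsSpheres (hconn : (cayley S).Connected) (hS : S.Finite)
    {E : ℕ → Set H} {C : ℕ} (hbd : ∀ m, (edgeBoundary S (E m)).encard ≤ C)
    (hE : ∀ m, MeetsSpheres S 1 (E m) m) (hEc : ∀ m, MeetsSpheres S 1 (E m)ᶜ m) :
    ∃ A, (edgeBoundary S A).Finite ∧ A.Infinite ∧ Aᶜ.Infinite := by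
  set U := hyperfilter ℕ
  have hsphere {T : ℕ → Set H} (hT : ∀ m, MeetsSpheres S 1 (T m) m) :
      ∀ r, 0 < r → ∃ y ∈ liminf T (U : Filter ℕ), (cayley S).dist 1 y = r := by
    intro r hr
    obtain ⟨y, hyT, hyr⟩ := U.liminf_inter_nonempty
      ((hconn.finite_setOf_dist_le (cayley_neighborSet_finite hS) 1 r).subset
        fun y (hy : _ = r) => hy.le)
      (Eventually.filter_mono Nat.hyperfilter_le_atTop (eventually_ge_atTop r) |>.mono
        fun m hm => hT m r hr hm)
    exact ⟨y, hyT, hyr⟩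
  refine ⟨liminf E (U : Filter ℕ),
    Set.finite_of_encard_le_coe (encard_edgeBoundary_liminf_le U hbd),
    SimpleGraph.infinite_of_forall_exists_dist_eq 1 (hsphere hE),
    (SimpleGraph.infinite_of_forall_exists_dist_eq 1 (hsphere hEc)).mono fun x hx hxE => ?_⟩
  obtain ⟨m, hm, hm'⟩ := ((mem_liminf_iff_eventually_mem.mp hx).and
    (mem_liminf_iff_eventually_mem.mp hxE)).exists
  exact hm hm'

theorem separatesInfiniteComponents_innerBoundary (hconn : (cayley S).Connected) (hS : S.Finite)
    {A : Set H} (hbd : (edgeBoundary S A).Finite) (hA : A.Infinite) (hAc : Aᶜ.Infinite) :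
    SeparatesInfiniteComponents S (innerBoundary S A) := by
  set K := innerBoundary S A
  have hK : K.Finite := innerBoundary_finite hbd
  have hB : innerBoundary S (A \ K) ⊆ ⋃ k ∈ K, (cayley S).neighborSet k := by
    rintro a ⟨⟨haA, haK⟩, b, hab, hb⟩
    have hbA : b ∈ A := by_contra fun hbA => haK ⟨haA, b, hab, hbA⟩
    exact Set.mem_biUnion (not_not.mp fun hbK => hb ⟨hbA, hbK⟩) hab.symm
  obtain ⟨g, ⟨hgA, hgK⟩, hg⟩ := exists_infinite_compIn hconn (hA.sdiff hK)
    (hAc.nonempty.mono fun x (hx : x ∉ A) hx' => hx hx'.1)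
    ((hK.biUnion fun k _ => cayley_neighborSet_finite hS k).subset hB)
  obtain ⟨h, hhA, hh⟩ := exists_infinite_compIn hconn hAc (by simpa using hA.nonempty)
    (innerBoundary_finite (by rwa [edgeBoundary_compl]))
  have hAcK : Aᶜ ⊆ Kᶜ := fun x hx hxK => hx (innerBoundary_subset A hxK)
  refine ⟨g, h, hgK, hAcK hhA, hg.mono (compIn_mono (fun x hx => hx.2) g),
    hh.mono (compIn_mono hAcK h), fun ⟨w, hw⟩ => ?_⟩
  obtain ⟨a, haw, haK, -⟩ := exists_mem_support_innerBoundary w hgA hhA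
  exact hw a haw haK

end Ends

theorem stmt0_general {H : Type*} [Group H] [Infinite H] (S : Finset H)
    (hgen : Subgroup.closure (S : Set H) = ⊤)
    (C : ℕ)
    (F : ℕ → Set H) (hFfin : ∀ n, (F n).Finite)
    (hbd : ∀ n, (edgeBoundary (S : Set H) (F n)).encard ≤ C)
    (hgrow : Tendsto (fun n => (F n).ncard) atTop atTop) :
    ∃ K : Set H, K.Finite ∧ ∃ g h : H, g ∉ K ∧ h ∉ K ∧
      (compIn (S : Set H) Kᶜ g).Infinite ∧ (compIn (S : Set H) Kᶜ h).Infinite ∧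
      ¬ reachIn (S : Set H) Kᶜ g h := by
  have hconn := cayley_connected hgen
  by_contra hne
  have hsep (K : Set H) (hK : K.Finite) : ¬ SeparatesInfiniteComponents (S : Set H) K :=
    fun hKsep => hne ⟨K, hK, hKsep⟩
  have hE (m : ℕ) : ∃ E, (edgeBoundary (S : Set H) E).encard ≤ C ∧
      MeetsSpheres (S : Set H) 1 E m ∧ MeetsSpheres (S : Set H) 1 Eᶜ m := by
    obtain ⟨n, hn⟩ := (hgrow.eventually_gt_atTop
      (C * {y | (cayley (S : Set H)).dist 1 y ≤ m}.ncard)).exists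
    exact exists_meetsSpheres_one_of_large hconn S.finite_toSet (hFfin n) (hbd n)
      (hsep _ (hFfin n)) hn
  choose E hEbd hEsph hEcsph using hE
  obtain ⟨A, hAbd, hA, hAc⟩ :=
    exists_infinite_coinfinite_of_meetsSpheres hconn S.finite_toSet hEbd hEsph hEcsph
  exact hsep _ (innerBoundary_finite hAbd)
    (separatesInfiniteComponents_innerBoundary hconn S.finite_toSet hAbd hA hAc)

/-- a f.g. infinite group admitting arbitrarily large finite sets with
uniformly bounded edge boundary has at least 2 ends. -/
theorem stmt0 {H : Type*} [Group H] [Infinite H] (S : Finset H)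
    (hsym : ∀ s ∈ S, s⁻¹ ∈ S)
    (hgen : Subgroup.closure (S : Set H) = ⊤)
    (C : ℕ) (hC : 0 < C)
    (F : ℕ → Set H) (hFfin : ∀ n, (F n).Finite)
    (hbd : ∀ n, (edgeBoundary (S : Set H) (F n)).encard ≤ C)
    (hgrow : Tendsto (fun n => (F n).ncard) atTop atTop) :
    ∃ K : Set H, K.Finite ∧ ∃ g h : H, g ∉ K ∧ h ∉ K ∧
      (compIn (S : Set H) Kᶜ g).Infinite ∧ (compIn (S : Set H) Kᶜ h).Infinite ∧
      ¬ reachIn (S : Set H) Kᶜ g h :=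
  stmt0_general S hgen C F hFfin hbd hgrow
end

section
/- Let H be a finitely generated group with Cayley graph Cay(H,S), and let F be a finite subset of H. If F' is obtained from F by adjoining all vertices of the finite connected components of the complement Cay(H,S)\F, then the edge boundary of F' is contained in the edge boundary of F; in particular |∂F'| ≤ |∂F|, and every connected component of the complement of F' is infinite. -/
open MeasureTheory ENNReal Filter

lemma reachIn_symm_s1 {H : Type*} [Group H] {S A : Set H} {g h : H}
    (hr : reachIn S A g h) : reachIn S A h g := by
  obtain ⟨w, hw⟩ := hr
  exact ⟨w.reverse, fun v hv => hw v (by simpa using hv)⟩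

lemma reachIn_trans_s1 {H : Type*} [Group H] {S A : Set H} {a b c : H}
    (h1 : reachIn S A a b) (h2 : reachIn S A b c) : reachIn S A a c := by
  obtain ⟨w1, hw1⟩ := h1
  obtain ⟨w2, hw2⟩ := h2
  refine ⟨w1.append w2, fun v hv => ?_⟩
  rcases (SimpleGraph.Walk.mem_support_append_iff _ _).1 hv with h | h
  · exact hw1 v h
  · exact hw2 v h

lemma compIn_subset_s1 {H : Type*} [Group H] {S A : Set H} {g h : H}
    (hr : reachIn S A g h) : compIn S A h ⊆ compIn S A g :=
  fun _ hx => reachIn_trans_s1 hr hx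

lemma adj_reachIn {H : Type*} [Group H] {S A : Set H} {a b : H}
    (hab : (cayley S).Adj a b) (ha : a ∈ A) (hb : b ∈ A) : reachIn S A a b := by
  refine ⟨SimpleGraph.Walk.cons hab SimpleGraph.Walk.nil, fun v hv => ?_⟩
  simp only [SimpleGraph.Walk.support_cons, SimpleGraph.Walk.support_nil,
    List.mem_cons, List.mem_singleton] at hv
  rcases hv with rfl | rfl | h
  · exact ha
  · exact hb
  · simp at h

/-- filling in the finite components of the complement of a finite set `F`
does not increase the edge boundary, and afterwards every complementary component is
infinite. -/
theorem stmt1 {H : Type*} [Group H] (S : Finset H)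
    (hsym : ∀ s ∈ S, s⁻¹ ∈ S)
    (F : Set H) (hF : F.Finite) :
    let F' : Set H := F ∪ {h : H | h ∉ F ∧ (compIn (S : Set H) Fᶜ h).Finite}
    edgeBoundary (S : Set H) F' ⊆ edgeBoundary (S : Set H) F ∧
    (edgeBoundary (S : Set H) F').encard ≤ (edgeBoundary (S : Set H) F).encard ∧
    ∀ h ∉ F', (compIn (S : Set H) F'ᶜ h).Infinite := by
  classical
  intro F'
  have hsub : edgeBoundary (S : Set H) F' ⊆ edgeBoundary (S : Set H) F := by
    rintro e ⟨a, b, rfl, hab, haF', hbF'⟩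
    have hbF : b ∉ F := fun hb => hbF' (Or.inl hb)
    have hbInf : ¬ (compIn (S : Set H) Fᶜ b).Finite := fun hfin => hbF' (Or.inr ⟨hbF, hfin⟩)
    have haF : a ∈ F := by
      by_contra haF
      rcases haF' with h | ⟨_, hfin⟩
      · exact haF h
      have hr : reachIn (S : Set H) Fᶜ a b := adj_reachIn hab haF hbF
      exact hbInf (hfin.subset (compIn_subset_s1 hr))
    exact ⟨a, b, rfl, hab, haF, hbF⟩
  refine ⟨hsub, Set.encard_mono hsub, ?_⟩
  intro h hh
  have hhF : h ∉ F := fun hh' => hh (Or.inl hh')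
  have hhInf : (compIn (S : Set H) Fᶜ h).Infinite := by
    by_contra hfin
    exact hh (Or.inr ⟨hhF, Set.not_infinite.1 hfin⟩)
  refine hhInf.mono ?_
  intro x hx
  obtain ⟨w, hw⟩ := hx
  refine ⟨w, fun v hv => ?_⟩
  -- v is reachable from h within Fᶜ, so its component is infinite, hence v ∉ F'
  have hvr : reachIn (S : Set H) Fᶜ h v := ⟨w.takeUntil v hv, fun u hu =>
    hw u (SimpleGraph.Walk.support_takeUntil_subset w hv hu)⟩
  have hvF : v ∉ F := hw v hv
  intro hvF'
  rcases hvF' with h' | ⟨_, hfin⟩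
  · exact hvF h'
  · exact hhInf (hfin.subset (compIn_subset_s1 (reachIn_symm_s1 hvr)))
end

section
/- Let T be the Cayley graph of a free group F with respect to a free generating set, and let ξ be an end of T with geodesic ray r : ℕ → F from e (r(0) = e, r(n) at distance n from e, converging to ξ). For n ∈ ℕ let G(n, ξ) = {g ∈ F : (g | ξ)_e ≤ n}. Then the edge boundary of G(n, ξ) in T consists of exactly one edge, namely the edge from r(n) to r(n+1). -/
/-- An end of the tree Cayley graph of a free group, given as a geodesic ray from the
identity: `r n` is the vertex at distance `n` from the identity, and the reduced words
form a prefix chain. -/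
structure FreeRay (β : Type*) [DecidableEq β] where
  r : ℕ → FreeGroup β
  len : ∀ n : ℕ, (r n).toWord.length = n
  pref : ∀ n : ℕ, (r n).toWord <+: (r (n + 1)).toWord

/-- The Gromov product `(g | ξ)_e` at the identity: the distance from `e` to the median
of `e`, `g`, `ξ` in the tree, i.e. the length of the longest common prefix of the reduced
word of `g` with the ray `ξ`. -/
noncomputable def gromovProd {β : Type*} [DecidableEq β] (ξ : FreeRay β)
    (g : FreeGroup β) : ℕ :=
  sSup {n : ℕ | (ξ.r n).toWord <+: g.toWord}

/-- The edge boundary of `G(n,ξ)` in the tree Cayley graph of the free group: unordered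
edges (adjacency meaning the quotient has reduced word length 1, i.e. it is a generator
or an inverse generator) with exactly one endpoint in `G(n,ξ)`. -/
noncomputable def endSetBoundary {β : Type*} [DecidableEq β] (ξ : FreeRay β) (n : ℕ) :
    Set (Sym2 (FreeGroup β)) :=
  {e | ∃ a b : FreeGroup β, e = s(a, b) ∧ (a⁻¹ * b).toWord.length = 1 ∧
    gromovProd ξ a ≤ n ∧ ¬ gromovProd ξ b ≤ n}

section Aux

variable {β : Type*} [DecidableEq β]

open FreeGroup List

/-- tail of a reduced word is reduced -/
lemma reduce_tail_of_cons {x : β × Bool} {t : List (β × Bool)}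
    (h : FreeGroup.reduce (x :: t) = x :: t) : FreeGroup.reduce t = t := by
  rw [FreeGroup.reduce.cons] at h
  cases ht : FreeGroup.reduce t with
  | nil =>
    rw [ht] at h
    simp only at h
    have ht' : t = [] := by
      injection h with h1 h2
      exact h2.symm
    subst ht'
    rfl
  | cons hd tl =>
    rw [ht] at h
    simp only at h
    split_ifs at h with hc
    · exfalso
      have hlen : tl.length = t.length + 1 := by rw [h]; simp
      have hle := (FreeGroup.reduce.red (L := t)).length_le
      rw [ht] at hle
      simp only [List.length_cons] at hle
      omega
    · injection h

lemma head_nocancel {x hd : β × Bool} {tl : List (β × Bool)}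
    (h : FreeGroup.reduce (x :: hd :: tl) = x :: hd :: tl) :
    ¬(x.1 = hd.1 ∧ x.2 = !hd.2) := by
  have ht : FreeGroup.reduce (hd :: tl) = hd :: tl := reduce_tail_of_cons h
  rw [FreeGroup.reduce.cons, ht] at h
  simp only at h
  split_ifs at h with hc
  · exfalso
    have hlen := congrArg List.length h
    simp only [List.length_cons] at hlen
    omega
  · exact hc

lemma reduce_cons_self {x : β × Bool} {t : List (β × Bool)}
    (ht : FreeGroup.reduce t = t)
    (hx : ∀ hd tl, t = hd :: tl → ¬(x.1 = hd.1 ∧ x.2 = !hd.2)) :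
    FreeGroup.reduce (x :: t) = x :: t := by
  rw [FreeGroup.reduce.cons, ht]
  cases t with
  | nil => rfl
  | cons hd tl =>
    simp only
    rw [if_neg (hx hd tl rfl)]

/-- prefix of a reduced word is reduced -/
lemma reduce_prefix {u v : List (β × Bool)}
    (h : FreeGroup.reduce (u ++ v) = u ++ v) : FreeGroup.reduce u = u := by
  induction u with
  | nil => rfl
  | cons x u ih =>
    have h' : FreeGroup.reduce (u ++ v) = u ++ v := reduce_tail_of_cons h
    have hu := ih h'
    apply reduce_cons_self hu
    intro hd tl htl
    subst htl
    exact head_nocancel (x := x) (hd := hd) (tl := tl ++ v) h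

/-- appending a non-cancelling letter to a reduced word stays reduced -/
lemma reduce_append_singleton {w : List (β × Bool)} {ℓ : β × Bool}
    (hw : FreeGroup.reduce w = w)
    (hlast : ∀ w' y, w = w' ++ [y] → ¬(y.1 = ℓ.1 ∧ y.2 = !ℓ.2)) :
    FreeGroup.reduce (w ++ [ℓ]) = w ++ [ℓ] := by
  induction w with
  | nil => exact FreeGroup.reduce_singleton ℓ
  | cons x t ih =>
    have ht : FreeGroup.reduce t = t := reduce_tail_of_cons hw
    have hIH : FreeGroup.reduce (t ++ [ℓ]) = t ++ [ℓ] := by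
      apply ih ht
      intro w' y hy
      exact hlast (x :: w') y (by rw [hy]; rfl)
    show FreeGroup.reduce (x :: (t ++ [ℓ])) = x :: (t ++ [ℓ])
    apply reduce_cons_self hIH
    intro hd tl htl
    cases t with
    | nil =>
      simp only [List.nil_append] at htl
      injection htl with h1 h2
      subst h1
      exact hlast [] x rfl
    | cons hd' tl' =>
      have : hd = hd' := by
        simp only [List.cons_append] at htl
        injection htl with h1 h2
        exact h1.symm
      subst this
      exact head_nocancel (x := x) (hd := hd) (tl := tl') hw

/-- tree adjacency: words differ by one letter at the end -/
lemma step_words {a b : FreeGroup β} (h : (a⁻¹ * b).toWord.length = 1) :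
    (∃ ℓ, b.toWord = a.toWord ++ [ℓ]) ∨ (∃ ℓ, a.toWord = b.toWord ++ [ℓ]) := by
  obtain ⟨ℓ, hℓ⟩ : ∃ ℓ, (a⁻¹ * b).toWord = [ℓ] := by
    cases hw : (a⁻¹ * b).toWord with
    | nil => rw [hw] at h; simp at h
    | cons y t =>
      cases t with
      | nil => exact ⟨y, rfl⟩
      | cons z t => rw [hw] at h; simp at h
  have hb : b = a * FreeGroup.mk [ℓ] := by
    rw [← hℓ, FreeGroup.mk_toWord]
    group
  have hb2 : b = FreeGroup.mk (a.toWord ++ [ℓ]) := by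
    rw [hb, ← FreeGroup.mul_mk, FreeGroup.mk_toWord]
  have hared : FreeGroup.reduce a.toWord = a.toWord := FreeGroup.reduce_toWord a
  rcases List.eq_nil_or_concat a.toWord with hnil | ⟨w', y, hwy'⟩
  · left
    refine ⟨ℓ, ?_⟩
    rw [hb2, FreeGroup.toWord_mk, hnil, List.nil_append, FreeGroup.reduce_singleton]
  · have hwy : a.toWord = w' ++ [y] := by rw [hwy', List.concat_eq_append]
    by_cases hc : y.1 = ℓ.1 ∧ y.2 = !ℓ.2
    · right
      refine ⟨y, ?_⟩
      have hy : y = (ℓ.1, !ℓ.2) := Prod.ext hc.1 hc.2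
      have hmul : FreeGroup.mk [y] * FreeGroup.mk [ℓ] = 1 := by
        have hinv : FreeGroup.mk [y] = (FreeGroup.mk [ℓ])⁻¹ := by
          rw [FreeGroup.inv_mk]
          congr 1
          simp [FreeGroup.invRev, hy]
        rw [hinv, inv_mul_cancel]
      have hbw : b = FreeGroup.mk w' := by
        have hsplit : FreeGroup.mk w' * (FreeGroup.mk [y] * FreeGroup.mk [ℓ]) =
            FreeGroup.mk (w' ++ [y] ++ [ℓ]) := by
          rw [FreeGroup.mul_mk, FreeGroup.mul_mk, List.append_assoc]
        rw [hb2, hwy, ← hsplit, hmul, mul_one]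
      have hw'red : FreeGroup.reduce w' = w' := by
        apply reduce_prefix (v := [y])
        rw [← hwy]; exact hared
      have hbword : b.toWord = w' := by
        rw [hbw, FreeGroup.toWord_mk, hw'red]
      rw [hwy, hbword]
    · left
      refine ⟨ℓ, ?_⟩
      rw [hb2, FreeGroup.toWord_mk]
      apply reduce_append_singleton hared
      intro w'' y'' hy''
      have : y'' = y := by
        have h1 := congrArg List.getLast? hy''
        rw [hwy] at h1
        simp at h1
        exact h1.symm
      rw [this]
      exact hc

lemma ray_mono (ξ : FreeRay β) {m k : ℕ} (h : m ≤ k) :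
    (ξ.r m).toWord <+: (ξ.r k).toWord := by
  induction h with
  | refl => exact List.prefix_rfl
  | step _ ih => exact ih.trans (ξ.pref _)

lemma gromov_le_iff (ξ : FreeRay β) (g : FreeGroup β) (n : ℕ) :
    gromovProd ξ g ≤ n ↔ ¬ (ξ.r (n + 1)).toWord <+: g.toWord := by
  constructor
  · intro h hp
    have hbdd : BddAbove {k : ℕ | (ξ.r k).toWord <+: g.toWord} := by
      refine ⟨g.toWord.length, fun k hk => ?_⟩
      have := hk.length_le
      rwa [ξ.len k] at this
    have : n + 1 ≤ gromovProd ξ g := le_csSup hbdd hp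
    omega
  · intro hp
    apply csSup_le
    · refine ⟨0, ?_⟩
      have : (ξ.r 0).toWord = [] := List.length_eq_zero_iff.mp (ξ.len 0)
      simp [Set.mem_setOf_eq, this]
    · intro k hk
      by_contra hkn
      push_neg at hkn
      exact hp ((ray_mono ξ (by omega : n + 1 ≤ k)).trans hk)

lemma ray_step (ξ : FreeRay β) (n : ℕ) :
    ∃ ℓ, (ξ.r (n + 1)).toWord = (ξ.r n).toWord ++ [ℓ] := by
  obtain ⟨t, ht⟩ := ξ.pref n
  have hlen : t.length = 1 := by
    have := congrArg List.length ht
    rw [List.length_append, ξ.len, ξ.len] at this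
    omega
  cases t with
  | nil => simp at hlen
  | cons y s =>
    cases s with
    | nil => exact ⟨y, ht.symm⟩
    | cons z s => simp at hlen

lemma ray_edge_len (ξ : FreeRay β) (n : ℕ) :
    ((ξ.r n)⁻¹ * ξ.r (n + 1)).toWord.length = 1 := by
  obtain ⟨ℓ, hℓ⟩ := ray_step ξ n
  have hr : ξ.r (n + 1) = ξ.r n * FreeGroup.mk [ℓ] := by
    rw [← FreeGroup.mk_toWord (x := ξ.r (n + 1)), hℓ, ← FreeGroup.mul_mk,
      FreeGroup.mk_toWord]
  rw [hr, inv_mul_cancel_left, FreeGroup.toWord_mk, FreeGroup.reduce_singleton]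
  rfl

end Aux

/-- the edge boundary of `G(n,ξ)` consists of exactly one edge, the edge
from `r(n)` to `r(n+1)` along the ray. -/
theorem stmt8 {β : Type*} [DecidableEq β] (ξ : FreeRay β) (n : ℕ) :
    endSetBoundary ξ n = {s(ξ.r n, ξ.r (n + 1))} := by
  ext e
  simp only [endSetBoundary, Set.mem_setOf_eq, Set.mem_singleton_iff]
  constructor
  · rintro ⟨a, b, rfl, hlen, ha, hb⟩
    rw [gromov_le_iff] at ha hb
    rw [not_not] at hb
    rcases step_words hlen with ⟨ℓ, hba⟩ | ⟨ℓ, hab⟩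
    · have hb' : (ξ.r (n + 1)).toWord <+: a.toWord ++ [ℓ] := by rwa [hba] at hb
      have h1 : ¬ (n + 1 ≤ a.toWord.length) := by
        intro hle
        apply ha
        exact List.prefix_of_prefix_length_le hb' (List.prefix_append a.toWord [ℓ])
          (by rw [ξ.len]; exact hle)
      have h2 : n + 1 ≤ a.toWord.length + 1 := by
        have := hb'.length_le
        rw [ξ.len, List.length_append] at this
        simpa using this
      have halen : a.toWord.length = n := by omega
      have hrb : (ξ.r (n + 1)).toWord = b.toWord := by
        apply hb.eq_of_length
        rw [ξ.len, hba, List.length_append, halen]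
        rfl
      have hra : (ξ.r n).toWord = a.toWord := by
        have hpre : (ξ.r n).toWord <+: a.toWord ++ [ℓ] :=
          (ray_mono ξ (Nat.le_succ n)).trans hb'
        have : (ξ.r n).toWord <+: a.toWord :=
          List.prefix_of_prefix_length_le hpre (List.prefix_append a.toWord [ℓ])
            (by rw [ξ.len, halen])
        exact this.eq_of_length (by rw [ξ.len, halen])
      have ea : a = ξ.r n := FreeGroup.toWord_injective hra.symm
      have eb : b = ξ.r (n + 1) := FreeGroup.toWord_injective hrb.symm
      rw [ea, eb]
    · exfalso
      apply ha
      refine hb.trans ?_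
      rw [hab]
      exact List.prefix_append b.toWord [ℓ]
  · intro h
    subst h
    refine ⟨ξ.r n, ξ.r (n + 1), rfl, ray_edge_len ξ n, ?_, ?_⟩
    · rw [gromov_le_iff]
      intro hp
      have := hp.length_le
      rw [ξ.len, ξ.len] at this
      omega
    · intro hle
      exact (gromov_le_iff ξ (ξ.r (n + 1)) n).mp hle List.prefix_rfl
end

section
/- Let G be a free group with free generating set and tree Cayley graph T, let ξ be an end of T, and for n ∈ ℕ let G(n, ξ) = {g ∈ G : (g | ξ)_e ≤ n}. Then ξ does not lie in the closure of G(n, ξ) in the end compactification Ḡ of T, for any n. -/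
/-- The tree Cayley graph of the free group: `a` and `b` are adjacent when `a⁻¹b` has
reduced word length 1 (i.e. is a generator or an inverse generator). -/
def freeCayley (β : Type*) [DecidableEq β] : SimpleGraph (FreeGroup β) :=
  SimpleGraph.fromRel (fun a b => (a⁻¹ * b).toWord.length = 1)

/-- Reachability in the complement of a vertex set `K` of the tree. -/
def reachAvoiding {β : Type*} [DecidableEq β] (K : Set (FreeGroup β))
    (g h : FreeGroup β) : Prop :=
  ∃ w : (freeCayley β).Walk g h, ∀ v ∈ w.support, v ∉ K

/-- The end compactification of the tree: vertices together with ends (geodesic rays).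
Its topology is generated by singletons of vertices together with, for each finite `K`
and `g₀ ∉ K`, the component of `g₀` in the complement of `K` together with all the ends
eventually lying in that component. -/
def endCompactificationTop (β : Type*) [DecidableEq β] :
    TopologicalSpace (FreeGroup β ⊕ FreeRay β) :=
  TopologicalSpace.generateFrom
    ({U | ∃ g : FreeGroup β, U = {Sum.inl g}} ∪
     {U | ∃ K : Set (FreeGroup β), K.Finite ∧ ∃ g₀, g₀ ∉ K ∧
        U = Sum.inl '' {g : FreeGroup β | reachAvoiding K g₀ g} ∪
            Sum.inr '' {ξ : FreeRay β | ∃ N : ℕ, ∀ m ≥ N, reachAvoiding K g₀ (ξ.r m)}})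

/-!
Deleting the vertex `ξ.r n` from the tree, the component of `ξ.r (n + 1)` lies in the cone of
elements whose reduced word starts with the word of `ξ.r (n + 1)`: an edge of the Cayley graph
appends or deletes a last letter, and the only way to leave the cone is to delete the last
letter of `ξ.r (n + 1)` itself, which lands on `ξ.r n`. This component together with the ends
eventually inside it is a basic open neighbourhood of `ξ`, and its vertices have Gromov product
at least `n + 1` with `ξ`.
-/

namespace FreeGroup

variable {α : Type*} [DecidableEq α]

theorem reduce_append_singleton_of_isReduced {L : List (α × Bool)} (hL : IsReduced L)
    (x : α × Bool) : reduce (L ++ [x]) = L ++ [x] ∨ reduce (L ++ [x]) = L.dropLast := by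
  rcases L.eq_nil_or_concat' with rfl | ⟨L', ⟨y, b⟩, rfl⟩
  · exact Or.inl (reduce_singleton x)
  obtain ⟨x, c⟩ := x
  by_cases hxy : y = x → b = c
  · exact Or.inl <| IsReduced.reduce_eq <|
      List.isChain_append.mpr ⟨hL, IsReduced.singleton, by simpa using hxy⟩
  · obtain ⟨rfl, rfl⟩ : y = x ∧ c = !b := by
      push Not at hxy
      exact ⟨hxy.1, by cases b <;> cases c <;> simp_all⟩
    have hstep : Red.Step (L' ++ [(y, b), (y, !b)]) L' := by
      simpa using (Red.Step.not : Red.Step (L' ++ (y, b) :: (y, !b) :: []) (L' ++ []))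
    right
    rw [List.dropLast_concat, List.append_assoc, List.singleton_append, reduce.Step.eq hstep,
      (hL.infix (List.prefix_append L' [(y, b)]).isInfix).reduce_eq]

end FreeGroup

section CayleyTree

open FreeGroup

variable {α : Type*} [DecidableEq α]

theorem freeCayley_adj_of_toWord_eq_append {v w : FreeGroup α} {x : α × Bool}
    (h : w.toWord = v.toWord ++ [x]) : (freeCayley α).Adj v w := by
  have hw : w = v * mk [x] := by
    rw [← mk_toWord (x := w), h, ← mul_mk, mk_toWord]
  refine ⟨fun hvw => by simpa [hvw] using congrArg List.length h, Or.inl ?_⟩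
  change (v⁻¹ * w).toWord.length = 1
  rw [hw, inv_mul_cancel_left, toWord_mk, reduce_singleton, List.length_singleton]

theorem toWord_of_freeCayley_adj {v w : FreeGroup α} (h : (freeCayley α).Adj v w) :
    w.toWord = v.toWord.dropLast ∨ ∃ x, w.toWord = v.toWord ++ [x] := by
  have hlen : (v⁻¹ * w).toWord.length = 1 := by
    rcases h.2 with h1 | h1
    · exact h1
    · rwa [← inv_inv (v⁻¹ * w), mul_inv_rev, inv_inv, toWord_inv, invRev_length]
  obtain ⟨x, hx⟩ := List.length_eq_one_iff.mp hlen
  have hw : w.toWord = reduce (v.toWord ++ [x]) := by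
    rw [← hx, ← toWord_mul, mul_inv_cancel_left]
  rcases reduce_append_singleton_of_isReduced isReduced_toWord x with h' | h'
  · exact Or.inr ⟨x, hw.trans h'⟩
  · exact Or.inl (hw.trans h')

theorem prefix_toWord_of_walk {c u g : FreeGroup α} (w : (freeCayley α).Walk u g)
    (hw : mk c.toWord.dropLast ∉ w.support) (hu : c.toWord <+: u.toWord) :
    c.toWord <+: g.toWord := by
  induction w with
  | nil => exact hu
  | @cons u v g hadj w ih =>
    rw [SimpleGraph.Walk.support_cons, List.mem_cons, not_or] at hw
    refine ih hw.2 ?_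
    obtain ⟨t, ht⟩ := hu
    rcases toWord_of_freeCayley_adj hadj with hv | ⟨x, hv⟩
    · rcases eq_or_ne t [] with rfl | ht'
      · have hvc : v = mk c.toWord.dropLast := by
          rw [← mk_toWord (x := v), hv, ← ht, List.append_nil]
        exact absurd (hvc ▸ w.start_mem_support) hw.2
      · rw [hv, ← ht, List.dropLast_append_of_ne_nil ht']
        exact List.prefix_append _ _
    · rw [hv, ← ht, List.append_assoc]
      exact List.prefix_append _ _

theorem prefix_toWord_of_reachAvoiding {c g : FreeGroup α}
    (h : reachAvoiding {mk c.toWord.dropLast} c g) : c.toWord <+: g.toWord := by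
  obtain ⟨w, hw⟩ := h
  exact prefix_toWord_of_walk w (fun hmem => hw _ hmem rfl) List.prefix_rfl

end CayleyTree

namespace FreeRay

open FreeGroup

variable {β : Type*} [DecidableEq β] (ξ : FreeRay β)

theorem r_injective : Function.Injective ξ.r := fun a b h => by
  simpa only [ξ.len] using congrArg (fun g => g.toWord.length) h

theorem exists_toWord_succ (k : ℕ) : ∃ x, (ξ.r (k + 1)).toWord = (ξ.r k).toWord ++ [x] := by
  obtain ⟨t, ht⟩ := ξ.pref k
  have hlen : t.length = 1 := by
    have := congrArg List.length ht
    simp only [List.length_append, ξ.len] at this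
    omega
  obtain ⟨x, rfl⟩ := List.length_eq_one_iff.mp hlen
  exact ⟨x, ht.symm⟩

theorem mk_dropLast_toWord_succ (k : ℕ) :
    FreeGroup.mk (ξ.r (k + 1)).toWord.dropLast = ξ.r k := by
  obtain ⟨x, hx⟩ := ξ.exists_toWord_succ k
  rw [hx, List.dropLast_concat, mk_toWord]

theorem adj_succ (k : ℕ) : (freeCayley β).Adj (ξ.r k) (ξ.r (k + 1)) :=
  freeCayley_adj_of_toWord_eq_append (ξ.exists_toWord_succ k).choose_spec

theorem reachAvoiding_r {k m : ℕ} (h : k < m) :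
    reachAvoiding {ξ.r k} (ξ.r (k + 1)) (ξ.r m) := by
  induction m, Nat.succ_le_of_lt h using Nat.le_induction with
  | base => exact ⟨.nil, by simpa using ξ.r_injective.ne (by omega)⟩
  | succ m hm ih =>
    obtain ⟨w, hw⟩ := ih (by omega)
    refine ⟨w.concat (ξ.adj_succ m), fun v hv => ?_⟩
    rw [SimpleGraph.Walk.support_concat, List.mem_append, List.mem_singleton] at hv
    rcases hv with hv | rfl
    · exact hw v hv
    · simpa using ξ.r_injective.ne (by omega)

theorem le_gromovProd_of_prefix {g : FreeGroup β} {m : ℕ} (h : (ξ.r m).toWord <+: g.toWord) :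
    m ≤ gromovProd ξ g :=
  le_csSup ⟨g.toWord.length, fun k hk => ξ.len k ▸ hk.length_le⟩ h

end FreeRay

/-- the end `ξ` does not lie in the closure of `G(n,ξ) = {g : (g|ξ)_e ≤ n}`
in the end compactification of the tree. -/
theorem stmt13 {β : Type*} [DecidableEq β] (ξ : FreeRay β) (n : ℕ) :
    letI : TopologicalSpace (FreeGroup β ⊕ FreeRay β) := endCompactificationTop β
    (Sum.inr ξ : FreeGroup β ⊕ FreeRay β) ∉
      closure (Sum.inl '' {g : FreeGroup β | gromovProd ξ g ≤ n}) := by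
  let _ : TopologicalSpace (FreeGroup β ⊕ FreeRay β) := endCompactificationTop β
  set U : Set (FreeGroup β ⊕ FreeRay β) :=
    Sum.inl '' {g | reachAvoiding {ξ.r n} (ξ.r (n + 1)) g} ∪
      Sum.inr '' {ξ' | ∃ N, ∀ m ≥ N, reachAvoiding {ξ.r n} (ξ.r (n + 1)) (ξ'.r m)}
  have hU : IsOpen U := TopologicalSpace.isOpen_generateFrom_of_mem <| Or.inr
    ⟨{ξ.r n}, Set.finite_singleton _, ξ.r (n + 1), ξ.r_injective.ne (by omega), rfl⟩
  have hξU : Sum.inr ξ ∈ U := Or.inr ⟨ξ, ⟨n + 1, fun m hm => ξ.reachAvoiding_r hm⟩, rfl⟩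
  intro hmem
  obtain ⟨_, hgU, g, hg, rfl⟩ := mem_closure_iff.mp hmem U hU hξU
  have hreach : reachAvoiding {ξ.r n} (ξ.r (n + 1)) g := by simpa [U] using hgU
  rw [← ξ.mk_dropLast_toWord_succ n] at hreach
  exact Nat.not_succ_le_self n
    ((ξ.le_gromovProd_of_prefix (prefix_toWord_of_reachAvoiding hreach)).trans hg)
end
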